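/- arXiv:2301.06446 — 3 statements merged into one kernel-verified Lean document; each statement's English description precedes it below -/
import Mathlib

section
/- Let m ≡ 5 (mod 6) with m ≥ 5, n = 2^m − 1, and v = 2^{(m+1)/2} − 1. Then gcd(v, n) = 1 and for every integer a with 1 ≤ a ≤ 2^{(m−1)/2}, the binary weight of (a·v mod n) is congruent to 0 modulo 3. -/
/-!
Write `m = 2j + 1`, so that `v = 2^(j+1) - 1` and `3 ∣ j + 1`. Coprimality is
`gcd (2^(j+1) - 1) (2^(2j+1) - 1) = 2^gcd(j+1, 2j+1) - 1 = 1`. For `1 ≤ a ≤ 2^j` the product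
`a v` is already smaller than `n`, and `a v = 2^(j+1) (a - 1) + (2^(j+1) - 1 - (a - 1))`:
the low `j + 1` bits are the bitwise complement of `a - 1`, so together with the high part `a - 1`
they contribute exactly `j + 1` ones.
-/

def w2 (x : ℕ) : ℕ := (Nat.digits 2 x).sum

namespace Nat

variable {b : ℕ}

theorem digits_sum_eq_mod_add_digits_sum_div (hb : 1 < b) (x : ℕ) :
    (digits b x).sum = x % b + (digits b (x / b)).sum := by
  rcases x.eq_zero_or_pos with rfl | hx
  · simp
  · rw [digits_def' hb hx, List.sum_cons]

theorem digits_sum_add_base_pow_mul (hb : 1 < b) {k x : ℕ} (hx : x < b ^ k) (y : ℕ) :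
    (digits b (x + b ^ k * y)).sum = (digits b x).sum + (digits b y).sum := by
  rcases y.eq_zero_or_pos with rfl | hy
  · simp
  have hlen : (digits b x).length ≤ k := (digits_length_le_iff hb x).2 hx
  rw [← Nat.add_sub_cancel' hlen, ← digits_append_zeroes_append_digits hb hy]
  simp

theorem digits_sum_add_digits_sum_base_pow_sub_one_sub (hb : 1 < b) :
    ∀ {k x : ℕ}, x < b ^ k → (digits b x).sum + (digits b (b ^ k - 1 - x)).sum = k * (b - 1)
  | 0, x, hx => by simp_all
  | k + 1, x, hx => by
    have hq : x / b < b ^ k := Nat.div_lt_of_lt_mul (by rwa [mul_comm, ← pow_succ])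
    have hr : x % b < b := Nat.mod_lt x (by omega)
    -- Complementing in base `b` works digit by digit: `b^(k+1) - 1 - x` has last digit
    -- `b - 1 - x % b` and leading part `b^k - 1 - x / b`.
    have hcompl : b ^ (k + 1) - 1 - x = (b - 1 - x % b) + b ^ 1 * (b ^ k - 1 - x / b) := by
      have hdiv := Nat.div_add_mod x b
      have hmul : b ^ 1 * (b ^ k - 1 - x / b) = b ^ (k + 1) - b - b * (x / b) := by
        rw [pow_one, Nat.mul_sub, Nat.mul_sub, mul_one, pow_succ']
      have hle : b * (x / b) + b ≤ b ^ (k + 1) := by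
        rw [pow_succ']; nlinarith
      omega
    have hlast : (digits b (b - 1 - x % b)).sum = b - 1 - x % b := by
      rw [digits_sum_eq_mod_add_digits_sum_div hb, Nat.mod_eq_of_lt (by omega),
        Nat.div_eq_of_lt (by omega), digits_zero, List.sum_nil, add_zero]
    have ih := digits_sum_add_digits_sum_base_pow_sub_one_sub hb hq
    rw [hcompl, digits_sum_add_base_pow_mul hb (by rw [pow_one]; omega), hlast,
      digits_sum_eq_mod_add_digits_sum_div hb x]
    have hb1 : (k + 1) * (b - 1) = k * (b - 1) + (b - 1) := by ring
    omega

end Nat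

theorem w2_mul_two_pow_sub_one {k a : ℕ} (ha : 1 ≤ a) (hak : a ≤ 2 ^ k) :
    w2 (a * (2 ^ k - 1)) = k := by
  have hsplit : a * (2 ^ k - 1) = (2 ^ k - 1 - (a - 1)) + 2 ^ k * (a - 1) := by
    obtain ⟨c, rfl⟩ : ∃ c, a = c + 1 := ⟨a - 1, by omega⟩
    rw [Nat.add_sub_cancel]
    have hexp : (c + 1) * (2 ^ k - 1) + c = 2 ^ k * c + (2 ^ k - 1) := by
      rw [Nat.mul_sub, mul_one, add_mul, one_mul, mul_comm]
      have : c ≤ c * 2 ^ k := Nat.le_mul_of_pos_right c (by positivity)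
      omega
    omega
  have hc : a - 1 < 2 ^ k := by omega
  rw [w2, hsplit, Nat.digits_sum_add_base_pow_mul one_lt_two (by omega), add_comm,
    Nat.digits_sum_add_digits_sum_base_pow_sub_one_sub one_lt_two hc]
  simp

theorem mul_two_pow_succ_sub_one_lt {j a : ℕ} (hj : 1 ≤ j) (ha : a ≤ 2 ^ j) :
    a * (2 ^ (j + 1) - 1) < 2 ^ (2 * j + 1) - 1 := by
  have hle : a * (2 ^ (j + 1) - 1) ≤ 2 ^ j * (2 ^ (j + 1) - 1) := Nat.mul_le_mul_right _ ha
  have hpow : 2 ^ j * (2 ^ (j + 1) - 1) = 2 ^ (2 * j + 1) - 2 ^ j := by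
    rw [Nat.mul_sub, mul_one, ← pow_add]
    ring_nf
  have h2j : 2 ≤ 2 ^ j := by
    calc 2 = 2 ^ 1 := rfl
      _ ≤ 2 ^ j := Nat.pow_le_pow_right two_pos hj
  have : 2 ^ j ≤ 2 ^ (2 * j + 1) := Nat.pow_le_pow_right two_pos (by omega)
  omega

theorem stmt7_general (m : ℕ) (hm : m % 6 = 5)
    (n v : ℕ) (hn : n = 2 ^ m - 1) (hv : v = 2 ^ ((m + 1) / 2) - 1) :
    Nat.gcd v n = 1 ∧
    ∀ a : ℕ, 1 ≤ a → a ≤ 2 ^ ((m - 1) / 2) → w2 (a * v % n) % 3 = 0 := by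
  obtain ⟨j, rfl⟩ : ∃ j, m = 2 * j + 1 := ⟨m / 2, by omega⟩
  have hk : (2 * j + 1 + 1) / 2 = j + 1 := by omega
  have hj : (2 * j + 1 - 1) / 2 = j := by omega
  rw [hk] at hv
  subst hn hv
  refine ⟨?_, fun a ha1 ha2 => ?_⟩
  · have hgcd : Nat.gcd (j + 1) (2 * j + 1) = 1 := by
      rw [show 2 * j + 1 = (j + 1) + j by ring, Nat.gcd_self_add_right]
      simp
    rw [Nat.pow_sub_one_gcd_pow_sub_one, hgcd, pow_one]
  · rw [hj] at ha2
    rw [Nat.mod_eq_of_lt (mul_two_pow_succ_sub_one_lt (by omega) ha2),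
      w2_mul_two_pow_sub_one ha1 (ha2.trans (Nat.pow_le_pow_right two_pos j.le_succ))]
    omega

theorem stmt7 (m : ℕ) (hm : m % 6 = 5) (hm5 : 5 ≤ m)
    (n v : ℕ) (hn : n = 2 ^ m - 1) (hv : v = 2 ^ ((m + 1) / 2) - 1) :
    Nat.gcd v n = 1 ∧
    ∀ a : ℕ, 1 ≤ a → a ≤ 2 ^ ((m - 1) / 2) → w2 (a * v % n) % 3 = 0 :=
  stmt7_general m hm n v hn hv
end

section
/- Let m ≡ 3 (mod 6) with m ≥ 9 and n = 2^m − 1. For i ∈ {0,1,2}, define T_i = { 1 ≤ j ≤ n−1 : w₂(j) ≡ i (mod 3) }. Then |T_0| = (2^m − 8)/3 and |T_1| = |T_2| = (2^m + 1)/3. -/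
open Finset

theorem w2_zero : w2 0 = 0 := rfl

theorem ZMod.sum_univ_three_eq {M : Type*} [AddCommMonoid M] (f : ZMod 3 → M) (r : ZMod 3) :
    ∑ s, f s = f (r - 1) + f r + f (r + 1) := by
  have huniv : (univ : Finset (ZMod 3)) = {r - 1, r, r + 1} := by revert r; decide
  have h1 : r - 1 ∉ ({r, r + 1} : Finset (ZMod 3)) := by revert r; decide
  have h2 : r ∉ ({r + 1} : Finset (ZMod 3)) := by revert r; decide
  rw [huniv, sum_insert h1, sum_insert h2, sum_singleton, add_assoc]

theorem w2_two_pow_add {m j : ℕ} (hj : j < 2 ^ m) : w2 (2 ^ m + j) = w2 j + 1 := by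
  obtain ⟨k, hk⟩ : ∃ k, (Nat.digits 2 j).length + k = m :=
    (Nat.exists_eq_add_of_le ((Nat.digits_length_le_iff one_lt_two j).2 hj)).imp
      fun _ h => h.symm
  have h := Nat.digits_append_zeroes_append_digits (n := j) (k := k) one_lt_two one_pos
  rw [hk, mul_one, add_comm j] at h
  rw [w2, w2, ← h]
  simp

theorem w2_two_pow_sub_one (m : ℕ) : w2 (2 ^ m - 1) = m := by
  induction m with
  | zero => rfl
  | succ m ih =>
    have hpos := Nat.one_le_two_pow (n := m)
    rw [show 2 ^ (m + 1) - 1 = 2 ^ m + (2 ^ m - 1) by rw [pow_succ]; omega,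
      w2_two_pow_add (by omega), ih]

def residueCount (m : ℕ) (r : ZMod 3) : ℕ := #{j ∈ range (2 ^ m) | (w2 j : ZMod 3) = r}

theorem residueCount_zero (r : ZMod 3) : residueCount 0 r = if r = 0 then 1 else 0 := by
  simp [residueCount, filter_singleton, w2_zero, eq_comm, apply_ite card]

theorem residueCount_succ (m : ℕ) (r : ZMod 3) :
    residueCount (m + 1) r = residueCount m r + residueCount m (r - 1) := by
  simp only [residueCount, card_filter, pow_succ, mul_two, sum_range_add]
  congr 1
  refine sum_congr rfl fun j hj => ?_
  simp [w2_two_pow_add (mem_range.1 hj), eq_sub_iff_add_eq]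

theorem residueCount_pred_add_self_add_succ (m : ℕ) (r : ZMod 3) :
    residueCount m (r - 1) + residueCount m r + residueCount m (r + 1) = 2 ^ m := by
  rw [← ZMod.sum_univ_three_eq (residueCount m), ← card_range (2 ^ m)]
  exact (card_eq_sum_card_fiberwise (f := fun j => (w2 j : ZMod 3)) (by simp)).symm

def residueDeviation (m : ℕ) (r : ZMod 3) : ℤ := 3 * residueCount m r - 2 ^ m

theorem residueDeviation_succ (m : ℕ) (r : ZMod 3) :
    residueDeviation (m + 1) r = -residueDeviation m (r + 1) := by
  have h := residueCount_pred_add_self_add_succ m r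
  simp only [residueDeviation, residueCount_succ, pow_succ]
  push_cast
  linarith [congrArg ((↑) : ℕ → ℤ) h]

theorem residueDeviation_add_three (m : ℕ) (r : ZMod 3) :
    residueDeviation (m + 3) r = -residueDeviation m r := by
  simp only [residueDeviation_succ, neg_neg, add_assoc]
  rw [show (1 + (1 + 1) : ZMod 3) = 0 from rfl, add_zero]

theorem residueDeviation_of_mod_six_eq_three {m : ℕ} (hm : m % 6 = 3) (r : ZMod 3) :
    residueDeviation m r = -residueDeviation 0 r := by
  obtain ⟨k, rfl⟩ : ∃ k, m = 6 * k + 3 := ⟨m / 6, by omega⟩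
  induction k with
  | zero => exact residueDeviation_add_three 0 r
  | succ k ih =>
    rw [show 6 * (k + 1) + 3 = 6 * k + 3 + 3 + 3 by ring, residueDeviation_add_three,
      residueDeviation_add_three, neg_neg, ih (by omega)]

theorem residueCount_eq_card_Icc {m : ℕ} (hm : 1 ≤ m) (hm3 : (m : ZMod 3) = 0) (r : ZMod 3) :
    residueCount m r =
      #{j ∈ Icc 1 (2 ^ m - 2) | (w2 j : ZMod 3) = r} + 2 * if r = 0 then 1 else 0 := by
  have hpow : 2 ≤ 2 ^ m := Nat.le_self_pow (by omega) 2
  have hrange : range (2 ^ m) = insert 0 (insert (2 ^ m - 1) (Icc 1 (2 ^ m - 2))) := by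
    ext j; simp only [mem_range, mem_insert, mem_Icc]; omega
  rw [residueCount, hrange, card_filter, card_filter, sum_insert (by simp; omega),
    sum_insert (by simp; omega)]
  simp only [w2_zero, w2_two_pow_sub_one, hm3, Nat.cast_zero, eq_comm (a := (0 : ZMod 3))]
  split_ifs <;> ring

theorem card_Icc_filter_w2_mod_three {m : ℕ} (hm : m % 6 = 3) {i : ℕ} (hi : i < 3) :
    3 * #{j ∈ Icc 1 (2 ^ m - 2) | w2 j % 3 = i} + 9 * (if i = 0 then 1 else 0) = 2 ^ m + 1 := by
  have hm3 : (m : ZMod 3) = 0 := by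
    rw [ZMod.natCast_eq_zero_iff]; omega
  have hcast : ∀ j, w2 j % 3 = i ↔ (w2 j : ZMod 3) = i := fun j => by
    rw [ZMod.natCast_eq_natCast_iff', Nat.mod_eq_of_lt hi]
  have hi0 : (i : ZMod 3) = 0 ↔ i = 0 := by
    rw [ZMod.natCast_eq_zero_iff]; omega
  have hdev := residueDeviation_of_mod_six_eq_three hm i
  rw [residueDeviation, residueDeviation, residueCount_eq_card_Icc (by omega) hm3,
    residueCount_zero] at hdev
  simp only [hcast] at hdev ⊢
  rw [if_congr hi0 rfl rfl] at hdev
  push_cast at hdev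
  split_ifs at hdev ⊢ <;> zify <;> linarith

theorem stmt11_general (m : ℕ) (hm : m % 6 = 3) (n : ℕ) (hn : n = 2 ^ m - 1) :
    let T : ℕ → Finset ℕ := fun i => (Finset.Icc 1 (n - 1)).filter (fun j => w2 j % 3 = i)
    (T 0).card = (2 ^ m - 8) / 3 ∧ (T 1).card = (2 ^ m + 1) / 3 ∧
    (T 2).card = (2 ^ m + 1) / 3 := by
  intro T
  have hn1 : n - 1 = 2 ^ m - 2 := by omega
  have h0 := card_Icc_filter_w2_mod_three hm (i := 0) (by norm_num)
  have h1 := card_Icc_filter_w2_mod_three hm (i := 1) (by norm_num)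
  have h2 := card_Icc_filter_w2_mod_three hm (i := 2) (by norm_num)
  simp only [T, hn1]
  norm_num at h0 h1 h2
  omega

theorem stmt11 (m : ℕ) (hm : m % 6 = 3) (hm9 : 9 ≤ m) (n : ℕ) (hn : n = 2 ^ m - 1) :
    let T : ℕ → Finset ℕ := fun i => (Finset.Icc 1 (n - 1)).filter (fun j => w2 j % 3 = i)
    (T 0).card = (2 ^ m - 8) / 3 ∧ (T 1).card = (2 ^ m + 1) / 3 ∧
    (T 2).card = (2 ^ m + 1) / 3 :=
  stmt11_general m hm n hn
end

section
/- Let m be an odd integer with m ≥ 3 and n = 2^m − 1. Define T = { 1 ≤ j ≤ n−1 : w₂(j) ≡ 0 or 3 (mod 4) } and T' = { 1 ≤ j ≤ n−1 : w₂(j) ≡ 1 or 2 (mod 4) }. If m ≡ 1 (mod 4), then T and T' partition {1,...,n−1}, T = −T' (mod n), and |T| = |T'| = (n−1)/2. -/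
/-! For `j < 2 ^ m` the binary digits of `2 ^ m - 1 - j` are those of `j` flipped, so
`w₂ j + w₂ (n - j) = m`. As `m ≡ 1 (mod 4)`, this sends the residues `{0, 3}` of `w₂ j`
to the residues `{1, 2}` of `w₂ (n - j)` and back: the involution `j ↦ n - j` of
`{1, …, n - 1}` swaps `T` and `T'`, which therefore split it into two halves. -/

open Finset

lemma w2_add_two_mul {b : ℕ} (hb : b < 2) (a : ℕ) : w2 (b + 2 * a) = b + w2 a := by
  rcases Nat.eq_zero_or_pos (b + 2 * a) with h | h
  · obtain ⟨rfl, rfl⟩ : b = 0 ∧ a = 0 := by omega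
    rfl
  · rw [w2, Nat.digits_add 2 one_lt_two b a hb (by omega), List.sum_cons, ← w2]

lemma w2_add_w2_two_pow_sub_one_sub {m j : ℕ} (hj : j < 2 ^ m) :
    w2 j + w2 (2 ^ m - 1 - j) = m := by
  induction m generalizing j with
  | zero =>
    obtain rfl : j = 0 := by omega
    rfl
  | succ m ih =>
    have hpow : 2 ^ (m + 1) = 2 * 2 ^ m := by ring
    have hlow : j = j % 2 + 2 * (j / 2) := (Nat.mod_add_div j 2).symm
    have hcompl : 2 ^ (m + 1) - 1 - j = (1 - j % 2) + 2 * (2 ^ m - 1 - j / 2) := by omega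
    rw [hcompl, w2_add_two_mul (by omega), hlow, w2_add_two_mul (by omega), ← hlow]
    have hhigh := ih (j := j / 2) (by omega)
    omega

section Involution

variable {α : Type*} [DecidableEq α] {s : Finset α} {f : α → α}
  {p : α → Prop} [DecidablePred p]

lemma Finset.filter_eq_image_filter_not_of_involutive (hmaps : ∀ x ∈ s, f x ∈ s)
    (hinv : ∀ x ∈ s, f (f x) = x) (hswap : ∀ x ∈ s, p (f x) ↔ ¬ p x) :
    s.filter p = (s.filter (¬ p ·)).image f := by
  ext x
  simp only [mem_filter, mem_image]
  constructor
  · rintro ⟨hx, hpx⟩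
    exact ⟨f x, ⟨hmaps x hx, fun h => (hswap x hx).1 h hpx⟩, hinv x hx⟩
  · rintro ⟨y, ⟨hy, hpy⟩, rfl⟩
    exact ⟨hmaps y hy, (hswap y hy).2 hpy⟩

lemma Finset.two_mul_card_filter_of_involutive (hmaps : ∀ x ∈ s, f x ∈ s)
    (hinv : ∀ x ∈ s, f (f x) = x) (hswap : ∀ x ∈ s, p (f x) ↔ ¬ p x) :
    2 * #(s.filter p) = #s := by
  have hinj : Set.InjOn f (s.filter (¬ p ·)) := fun x hx y hy hxy => by
    rw [← hinv x (mem_filter.1 hx).1, ← hinv y (mem_filter.1 hy).1, hxy]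
  have hcard : #(s.filter p) = #(s.filter (¬ p ·)) := by
    rw [filter_eq_image_filter_not_of_involutive hmaps hinv hswap, card_image_of_injOn hinj]
  rw [← card_filter_add_card_filter_not (s := s) p, ← hcard, two_mul]

end Involution

theorem stmt15_general (m : ℕ) (hm1 : m % 4 = 1)
    (n : ℕ) (hn : n = 2 ^ m - 1) :
    let T : Finset ℕ :=
      (Finset.Icc 1 (n - 1)).filter (fun j => w2 j % 4 = 0 ∨ w2 j % 4 = 3)
    let T' : Finset ℕ :=
      (Finset.Icc 1 (n - 1)).filter (fun j => w2 j % 4 = 1 ∨ w2 j % 4 = 2)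
    T ∪ T' = Finset.Icc 1 (n - 1) ∧ T ∩ T' = ∅ ∧
    T = T'.image (fun j => n - j) ∧
    T.card = (n - 1) / 2 ∧ T'.card = (n - 1) / 2 := by
  intro T T'
  set s := Icc 1 (n - 1)
  set p : ℕ → Prop := fun j => w2 j % 4 = 0 ∨ w2 j % 4 = 3
  have hT : T = s.filter p := rfl
  have hT' : T' = s.filter (¬ p ·) := filter_congr fun j _ => by omega
  have hmaps : ∀ j ∈ s, n - j ∈ s := fun j hj => by
    simp only [s, mem_Icc] at hj ⊢
    omega
  have hinv : ∀ j ∈ s, n - (n - j) = j := fun j hj => by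
    simp only [s, mem_Icc] at hj
    omega
  have hswap : ∀ j ∈ s, p (n - j) ↔ ¬ p j := fun j hj => by
    have hj : j < 2 ^ m := by simp only [s, mem_Icc] at hj; omega
    have hcompl := w2_add_w2_two_pow_sub_one_sub hj
    rw [← hn] at hcompl
    omega
  have hhalf := two_mul_card_filter_of_involutive hmaps hinv hswap
  have hsplit := card_filter_add_card_filter_not (s := s) p
  rw [Nat.card_Icc] at hhalf hsplit
  rw [hT, hT']
  exact ⟨filter_union_filter_not_eq p s,
    disjoint_iff_inter_eq_empty.1 (disjoint_filter_filter_not s s p),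
    filter_eq_image_filter_not_of_involutive hmaps hinv hswap, by omega, by omega⟩

theorem stmt15 (m : ℕ) (hm3 : 3 ≤ m) (hmodd : Odd m) (hm1 : m % 4 = 1)
    (n : ℕ) (hn : n = 2 ^ m - 1) :
    let T : Finset ℕ :=
      (Finset.Icc 1 (n - 1)).filter (fun j => w2 j % 4 = 0 ∨ w2 j % 4 = 3)
    let T' : Finset ℕ :=
      (Finset.Icc 1 (n - 1)).filter (fun j => w2 j % 4 = 1 ∨ w2 j % 4 = 2)
    T ∪ T' = Finset.Icc 1 (n - 1) ∧ T ∩ T' = ∅ ∧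
    T = T'.image (fun j => n - j) ∧
    T.card = (n - 1) / 2 ∧ T'.card = (n - 1) / 2 :=
  stmt15_general m hm1 n hn
end
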